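/- Let L be an even lattice of odd rank n and determinant 2, let v ∈ L generate an isotropic line x of L/2L (q(v) ≡ 0 mod 2, v ∉ 2L), and suppose a₁,…,a_n is a ℤ-basis of L with a_j·v odd for some j. Then the ℤ-span of the set {(a_j·v)·a_i − (a_i·v)·a_j | 1 ≤ i ≤ n} ∪ {2a_i | 1 ≤ i ≤ n} ∪ {(1/2)(v − (v·v/2)·a_j)} equals the 2-neighbor L_x of L associated to x. -/

import Mathlib

/-!
Write `mᵢ = aᵢ·v` and `y = ∑ cᵢ aᵢ`, so `y·v = ∑ cᵢ mᵢ`. Every generator `m_j aᵢ − mᵢ a_j`, `2aᵢ`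
pairs evenly with `v`, hence lies in `M_x`. Conversely, for `y ∈ M_x` the identity
`m_j y = ∑ cᵢ (m_j aᵢ − mᵢ a_j) + (∑ cᵢ mᵢ) a_j` puts `m_j y` in the span (as `∑ cᵢ mᵢ` is even),
`2y` is there trivially, and `m_j` is odd, so `y` itself is in the span.
-/

open scoped InnerProductSpace

open Submodule Set

theorem Submodule.mem_of_two_smul_mem_of_odd_smul_mem {M : Type*} [AddCommGroup M]
    {P : Submodule ℤ M} {y : M} {a : ℤ} (ha : Odd a) (h2 : (2 : ℤ) • y ∈ P) (hodd : a • y ∈ P) :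
    y ∈ P := by
  obtain ⟨k, rfl⟩ := ha
  have hy : y = (2 * k + 1) • y - k • (2 : ℤ) • y := by module
  rw [hy]
  exact P.sub_mem hodd (P.smul_mem k h2)

section Generators

variable {M : Type*} [AddCommGroup M] {ι : Type*} [Fintype ι] (b : ι → M) (m : ι → ℤ) (j : ι)

theorem smul_sum_eq_sum_smul_sub_add (c : ι → ℤ) :
    m j • ∑ i, c i • b i = ∑ i, c i • (m j • b i - m i • b j) + (∑ i, c i * m i) • b j := by
  simp only [Finset.smul_sum, smul_sub, Finset.sum_sub_distrib, Finset.sum_smul, smul_smul,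
    mul_comm (m j)]
  abel

theorem sum_smul_mem_span_of_even {c : ι → ℤ} (hj : Odd (m j)) (hc : Even (∑ i, c i * m i)) :
    ∑ i, c i • b i ∈ span ℤ
      (range (fun i => m j • b i - m i • b j) ∪ range (fun i => (2 : ℤ) • b i)) := by
  set P := span ℤ (range (fun i => m j • b i - m i • b j) ∪ range (fun i => (2 : ℤ) • b i))
  have hpair : ∀ i, m j • b i - m i • b j ∈ P := fun i => subset_span (.inl ⟨i, rfl⟩)
  have htwo : ∀ i, (2 : ℤ) • b i ∈ P := fun i => subset_span (.inr ⟨i, rfl⟩)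
  refine P.mem_of_two_smul_mem_of_odd_smul_mem hj ?_ ?_
  · rw [Finset.smul_sum]
    exact P.sum_mem fun i _ => smul_comm (2 : ℤ) (c i) (b i) ▸ P.smul_mem _ (htwo i)
  · obtain ⟨k, hk⟩ := hc.two_dvd
    rw [smul_sum_eq_sum_smul_sub_add, hk, mul_comm, mul_smul]
    exact P.add_mem (P.sum_mem fun i _ => P.smul_mem _ (hpair i)) (P.smul_mem _ (htwo j))

end Generators

theorem Module.Basis.exists_sum_coe_eq {R M : Type*} [Ring R] [AddCommGroup M] [Module R M]
    {ι : Type*} [Fintype ι] {L : Submodule R M} (b : Module.Basis ι R L) {y : M} (hy : y ∈ L) :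
    ∃ c : ι → R, ∑ i, c i • (b i : M) = y :=
  ⟨b.repr ⟨y, hy⟩, by
    simpa only [coe_sum, SetLike.val_smul] using congrArg Subtype.val (b.sum_repr ⟨y, hy⟩)⟩

theorem real_inner_zsmul_left {V : Type*} [NormedAddCommGroup V] [InnerProductSpace ℝ V]
    (k : ℤ) (x y : V) : ⟪k • x, y⟫_ℝ = k * ⟪x, y⟫_ℝ := by
  rw [← Int.cast_smul_eq_zsmul ℝ, real_inner_smul_left]

theorem two_neighbor_generators_general
    {V : Type*} [NormedAddCommGroup V] [InnerProductSpace ℝ V]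
    (n : ℕ)
    (L : Submodule ℤ V)
    (b : Module.Basis (Fin n) ℤ ↥L)
    (v : ↥L) (mq : ℤ)
    (m : Fin n → ℤ) (hm : ∀ i, ⟪(b i : V), (v : V)⟫_ℝ = m i)
    (j : Fin n) (hj : Odd (m j))
    (Mx : Submodule ℤ V)
    (hMx : ∀ y : V, y ∈ Mx ↔ y ∈ L ∧ ∃ c : ℤ, ⟪y, (v : V)⟫_ℝ = 2 * c) :
    Submodule.span ℤ
        ((Set.range fun i : Fin n => m j • (b i : V) - m i • (b j : V)) ∪
          (Set.range fun i : Fin n => (2 : ℤ) • (b i : V)) ∪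
          {(2⁻¹ : ℝ) • ((v : V) - mq • (b j : V))}) =
      Mx ⊔ Submodule.span ℤ {(2⁻¹ : ℝ) • ((v : V) - mq • (b j : V))} := by
  rw [span_union]
  congr 1
  apply le_antisymm
  · rw [span_le]
    rintro _ (⟨i, rfl⟩ | ⟨i, rfl⟩) <;> rw [SetLike.mem_coe, hMx]
    · refine ⟨L.sub_mem (L.smul_mem _ (b i).2) (L.smul_mem _ (b j).2), 0, ?_⟩
      rw [inner_sub_left, real_inner_zsmul_left, real_inner_zsmul_left, hm, hm]
      ring
    · refine ⟨L.smul_mem _ (b i).2, m i, ?_⟩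
      rw [real_inner_zsmul_left, hm]
      push_cast
      ring
  · intro y hy
    obtain ⟨hyL, k, hk⟩ := (hMx y).mp hy
    obtain ⟨c, rfl⟩ := b.exists_sum_coe_eq hyL
    have hpairing : ∑ i, c i * m i = 2 * k := by
      simp only [sum_inner, real_inner_zsmul_left, hm] at hk
      exact_mod_cast hk
    exact sum_smul_mem_span_of_even _ m j hj ⟨k, by rw [hpairing]; ring⟩

/-- Generators for the `2`-neighbor `L_x` of an even lattice `L` of odd
rank `n` and determinant `2`, associated to the isotropic line `x` of `L/2L` generated
by `v`, given a `ℤ`-basis `a₁, …, a_n` of `L` and an index `j` with `a_j·v` odd.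
Here `Mx` is the preimage of `x^⊥` in `L`, `q(v) = v·v/2 = mq`, and
`L_x = Mx + ℤ·(1/2)(v - mq·a_j)`. -/
theorem two_neighbor_generators
    {V : Type*} [NormedAddCommGroup V] [InnerProductSpace ℝ V]
    (n : ℕ) (hodd : Odd n)
    (L : Submodule ℤ V)
    (hint : ∀ x ∈ L, ∀ y ∈ L, ∃ m : ℤ, ⟪x, y⟫_ℝ = m)
    (heven : ∀ x ∈ L, ∃ m : ℤ, ⟪x, x⟫_ℝ = 2 * m)
    (b : Module.Basis (Fin n) ℤ ↥L)
    (hdet : (Matrix.of fun i j => ⟪(b i : V), (b j : V)⟫_ℝ).det = 2)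
    (v : ↥L) (mq : ℤ) (hmq : ⟪(v : V), (v : V)⟫_ℝ = 2 * mq) (hq2 : Even mq)
    (hv2 : ¬ ∃ w : ↥L, (v : V) = (2 : ℤ) • (w : V))
    (m : Fin n → ℤ) (hm : ∀ i, ⟪(b i : V), (v : V)⟫_ℝ = m i)
    (j : Fin n) (hj : Odd (m j))
    (Mx : Submodule ℤ V)
    (hMx : ∀ y : V, y ∈ Mx ↔ y ∈ L ∧ ∃ c : ℤ, ⟪y, (v : V)⟫_ℝ = 2 * c) :
    Submodule.span ℤ
        ((Set.range fun i : Fin n => m j • (b i : V) - m i • (b j : V)) ∪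
          (Set.range fun i : Fin n => (2 : ℤ) • (b i : V)) ∪
          {(2⁻¹ : ℝ) • ((v : V) - mq • (b j : V))}) =
      Mx ⊔ Submodule.span ℤ {(2⁻¹ : ℝ) • ((v : V) - mq • (b j : V))} :=
  two_neighbor_generators_general n L b v mq m hm j hj Mx hMx
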